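/- arXiv:1004.5289 — 3 statements merged into one kernel-verified Lean document; each statement's English description precedes it below -/
import Mathlib

section
/- Let f : (0,1] → ℝ be positive, measurable and regularly varying at 0+ with index ρ > -1, i.e. for every λ > 0, f(λx)/f(x) → λ^ρ as x → 0+. Then F(x) := ∫₀ˣ f(v) dv is finite for small x > 0 and is regularly varying at 0+ with index ρ + 1, i.e. F(λx)/F(x) → λ^{ρ+1} as x → 0+ for every λ > 0. -/
/-!
Substituting `v = l t` turns `∫₀^{l x} f` into `∫₀ˣ l f(l t) dt`. Near `0` this integrand is
`l^(ρ+1) f(t) (1 + o(1))` uniformly on `(0, x]`, and since `f > 0` the relative error survives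
integration: `F(l x) = l^(ρ+1) F(x) (1 + o(1))`.
-/

open Filter MeasureTheory Set Topology

theorem setIntegral_Ioc_zero_mul_left (f : ℝ → ℝ) {l x : ℝ} (hl : 0 < l) (hx : 0 ≤ x) :
    ∫ v in Ioc 0 (l * x), f v = ∫ t in Ioc 0 x, l * f (l * t) := by
  rw [← intervalIntegral.integral_of_le (mul_nonneg hl.le hx),
    ← intervalIntegral.integral_of_le hx, intervalIntegral.integral_const_mul,
    intervalIntegral.integral_comp_mul_left f hl.ne', mul_zero, smul_eq_mul,
    mul_inv_cancel_left₀ hl.ne']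

theorem MeasureTheory.IntegrableOn.comp_mul_left_Ioc_zero {f : ℝ → ℝ} {l x : ℝ} (hl : 0 < l)
    (hx : 0 ≤ x) (hf : IntegrableOn f (Ioc 0 (l * x))) :
    IntegrableOn (fun t => f (l * t)) (Ioc 0 x) := by
  rw [← intervalIntegrable_iff_integrableOn_Ioc_of_le (mul_nonneg hl.le hx)] at hf
  rw [← intervalIntegrable_iff_integrableOn_Ioc_of_le hx]
  simpa [hl.ne'] using hf.comp_mul_left (c := l)

theorem setIntegral_Ioc_pos {f : ℝ → ℝ} {x : ℝ} (hx : 0 < x) (hf_pos : ∀ t ∈ Ioc 0 x, 0 < f t)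
    (hf : IntegrableOn f (Ioc 0 x)) : 0 < ∫ t in Ioc 0 x, f t := by
  have hnonneg : 0 ≤ᵐ[volume.restrict (Ioc 0 x)] f :=
    ae_restrict_of_forall_mem measurableSet_Ioc fun t ht => (hf_pos t ht).le
  rw [setIntegral_pos_iff_support_of_nonneg_ae hnonneg hf,
    inter_eq_right.2 fun t ht => Function.mem_support.2 (hf_pos t ht).ne']
  simpa using hx

theorem abs_setIntegral_sub_const_mul_le {α : Type*} [MeasurableSpace α] {μ : Measure α}
    {s : Set α} {f g : α → ℝ} {c ε : ℝ} (hs : MeasurableSet s)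
    (hf : IntegrableOn f s μ) (hg : IntegrableOn g s μ)
    (h : ∀ t ∈ s, |g t - c * f t| ≤ ε * f t) :
    |(∫ t in s, g t ∂μ) - c * ∫ t in s, f t ∂μ| ≤ ε * ∫ t in s, f t ∂μ := by
  rw [← integral_const_mul, ← integral_const_mul, ← integral_sub hg (hf.const_mul c),
    ← Real.norm_eq_abs]
  exact norm_integral_le_of_norm_le (hf.const_mul ε) (ae_restrict_of_forall_mem hs h)

theorem tendsto_setIntegral_Ioc_div_of_tendsto_div {f g : ℝ → ℝ} {b c : ℝ} (hb : 0 < b)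
    (hf_pos : ∀ t ∈ Ioc 0 b, 0 < f t) (hf : IntegrableOn f (Ioc 0 b))
    (hg : IntegrableOn g (Ioc 0 b)) (h : Tendsto (fun t => g t / f t) (𝓝[>] 0) (𝓝 c)) :
    Tendsto (fun x => (∫ t in Ioc 0 x, g t) / ∫ t in Ioc 0 x, f t) (𝓝[>] 0) (𝓝 c) := by
  rw [Metric.tendsto_nhds]
  intro ε hε
  obtain ⟨u, hu, hclose⟩ :=
    mem_nhdsGT_iff_exists_Ioc_subset.1 (Metric.tendsto_nhds.1 h (ε / 2) (half_pos hε))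
  refine mem_nhdsGT_iff_exists_Ioc_subset.2 ⟨min u b, lt_min hu hb, fun x hx => ?_⟩
  have hxb : Ioc 0 x ⊆ Ioc 0 b := Ioc_subset_Ioc_right (hx.2.trans (min_le_right u b))
  have hpointwise : ∀ t ∈ Ioc 0 x, |g t - c * f t| ≤ ε / 2 * f t := fun t ht => by
    have hft := hf_pos t (hxb ht)
    have hdist : |g t / f t - c| < ε / 2 :=
      hclose (Ioc_subset_Ioc_right (hx.2.trans (min_le_left u b)) ht)
    calc |g t - c * f t| = |g t / f t - c| * f t := by
          rw [← abs_of_pos hft, ← abs_mul, abs_of_pos hft, sub_mul, div_mul_cancel₀ _ hft.ne']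
      _ ≤ ε / 2 * f t := mul_le_mul_of_nonneg_right hdist.le hft.le
  have hF := setIntegral_Ioc_pos hx.1 (fun t ht => hf_pos t (hxb ht)) (hf.mono_set hxb)
  show |_ - c| < ε
  rw [div_sub' hF.ne', mul_comm _ c, abs_div, abs_of_pos hF, div_lt_iff₀ hF]
  calc _ ≤ ε / 2 * ∫ t in Ioc 0 x, f t :=
        abs_setIntegral_sub_const_mul_le measurableSet_Ioc (hf.mono_set hxb) (hg.mono_set hxb)
          hpointwise
    _ < ε * ∫ t in Ioc 0 x, f t := mul_lt_mul_of_pos_right (half_lt_self hε) hF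

theorem integral_regularly_varying_general (f : ℝ → ℝ) (ρ : ℝ)
    (hpos : ∀ x ∈ Set.Ioc (0 : ℝ) 1, 0 < f x)
    (hint : IntegrableOn f (Set.Ioc (0 : ℝ) 1))
    (hrv : ∀ l : ℝ, 0 < l →
      Tendsto (fun x : ℝ => f (l * x) / f x) (nhdsWithin 0 (Set.Ioi 0))
        (nhds (l ^ ρ))) :
    (∃ b : ℝ, 0 < b ∧ ∀ x ∈ Set.Ioc (0 : ℝ) b, IntegrableOn f (Set.Ioc 0 x)) ∧
      ∀ l : ℝ, 0 < l →
        Tendsto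
          (fun x : ℝ => (∫ v in Set.Ioc (0 : ℝ) (l * x), f v) /
            ∫ v in Set.Ioc (0 : ℝ) x, f v)
          (nhdsWithin 0 (Set.Ioi 0)) (nhds (l ^ (ρ + 1))) := by
  refine ⟨⟨1, one_pos, fun x hx => hint.mono_set (Ioc_subset_Ioc_right hx.2)⟩, fun l hl => ?_⟩
  set b := min 1 l⁻¹
  have hb : 0 < b := lt_min one_pos (inv_pos.2 hl)
  have hlb : l * b ≤ 1 := (mul_le_mul_of_nonneg_left (min_le_right _ _) hl.le).trans_eq
    (mul_inv_cancel₀ hl.ne')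
  have hf : IntegrableOn f (Ioc 0 b) := hint.mono_set (Ioc_subset_Ioc_right (min_le_left _ _))
  have hg : IntegrableOn (fun t => l * f (l * t)) (Ioc 0 b) :=
    ((hint.mono_set (Ioc_subset_Ioc_right hlb)).comp_mul_left_Ioc_zero hl hb.le).const_mul l
  have hratio : Tendsto (fun t => l * f (l * t) / f t) (𝓝[>] 0) (𝓝 (l ^ (ρ + 1))) := by
    simpa only [mul_div_assoc, Real.rpow_add_one hl.ne', mul_comm _ l] using (hrv l hl).const_mul l
  refine (tendsto_setIntegral_Ioc_div_of_tendsto_div hb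
    (fun t ht => hpos t ⟨ht.1, ht.2.trans (min_le_left _ _)⟩) hf hg hratio).congr' ?_
  filter_upwards [self_mem_nhdsWithin] with x hx
  rw [setIntegral_Ioc_zero_mul_left f hl (le_of_lt hx)]

/-- If `f` is positive, measurable, integrable near `0`, and regularly varying at `0+`
with index `ρ > -1`, then `F(x) = ∫₀ˣ f` is finite for small `x > 0` and is regularly
varying at `0+` with index `ρ + 1`. -/
theorem integral_regularly_varying (f : ℝ → ℝ) (ρ : ℝ) (hρ : -1 < ρ)
    (hpos : ∀ x ∈ Set.Ioc (0 : ℝ) 1, 0 < f x)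
    (hmeas : Measurable f)
    (hint : IntegrableOn f (Set.Ioc (0 : ℝ) 1))
    (hrv : ∀ l : ℝ, 0 < l →
      Tendsto (fun x : ℝ => f (l * x) / f x) (nhdsWithin 0 (Set.Ioi 0))
        (nhds (l ^ ρ))) :
    (∃ b : ℝ, 0 < b ∧ ∀ x ∈ Set.Ioc (0 : ℝ) b, IntegrableOn f (Set.Ioc 0 x)) ∧
      ∀ l : ℝ, 0 < l →
        Tendsto
          (fun x : ℝ => (∫ v in Set.Ioc (0 : ℝ) (l * x), f v) /
            ∫ v in Set.Ioc (0 : ℝ) x, f v)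
          (nhdsWithin 0 (Set.Ioi 0)) (nhds (l ^ (ρ + 1))) :=
  integral_regularly_varying_general f ρ hpos hint hrv
end

section
/- Let c : [0,1] → ℝ be positive and continuous, fix κ > 0, 1 ≤ p < ∞, and set γ = 1/(κ + 1/p). Among all positive continuous densities h on [0,1] with ∫₀¹ h = 1, the functional h ↦ ( ∫₀¹ c(t)^{p/2} h(t)^{−κp} dt )^{1/p} is minimized by h*(t) = c(t)^{γ/2} / ∫₀¹ c(s)^{γ/2} ds, and the minimal value equals ( ∫₀¹ c(t)^{γ/2} dt )^{1/γ}. -/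
/-!
With `u = c^(γ/2)` one has `c^(p/2) = u^(κp+1)` because `γ (κp + 1) = p`. Hölder's inequality
with exponents `κp + 1` and `(κp + 1)/(κp)`, applied to the factorisation
`u = (u h^(-κp/(κp+1))) · h^(κp/(κp+1))`, gives `∫ u ≤ (∫ c^(p/2) h^(-κp))^(1/(κp+1))` for every
density `h`; for `h ∝ u` the integrand `c^(p/2) h^(-κp)` is a constant multiple of `u` and
equality holds.
-/

open MeasureTheory

section
variable {α : Type*} [MeasurableSpace α] {μ : Measure α}

theorem memLp_ofReal_of_integrable_rpow {f : α → ℝ} {q : ℝ} (hq : 0 < q)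
    (hf : AEStronglyMeasurable f μ) (hf0 : 0 ≤ᵐ[μ] f) (hfq : Integrable (fun x => f x ^ q) μ) :
    MemLp f (ENNReal.ofReal q) μ := by
  rw [← integrable_norm_rpow_iff hf (by simpa using hq) ENNReal.ofReal_ne_top,
    ENNReal.toReal_ofReal hq.le]
  refine hfq.congr ?_
  filter_upwards [hf0] with x hx
  rw [Real.norm_of_nonneg hx]

theorem integral_le_rpow_integral_rpow_mul_rpow_neg {u h : α → ℝ} {r : ℝ} (hr : 0 < r)
    (hu : AEStronglyMeasurable u μ) (hu0 : 0 ≤ᵐ[μ] u) (hh : Integrable h μ)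
    (hh0 : ∀ᵐ x ∂μ, 0 < h x) (huh : Integrable (fun x => u x ^ (r + 1) * h x ^ (-r)) μ) :
    ∫ x, u x ∂μ ≤
      (∫ x, u x ^ (r + 1) * h x ^ (-r) ∂μ) ^ (1 / (r + 1)) * (∫ x, h x ∂μ) ^ (r / (r + 1)) := by
  set s := r / (r + 1)
  have hr1 : 0 < r + 1 := by linarith
  have hs : s * (r + 1) = r := div_mul_cancel₀ r hr1.ne'
  have hconj : (r + 1).HolderConjugate ((r + 1) / r) :=
    Real.holderConjugate_iff.2 ⟨by linarith, by field_simp; ring⟩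
  have hf0 : 0 ≤ᵐ[μ] fun x => u x * h x ^ (-s) := by
    filter_upwards [hu0, hh0] with x hux hhx
    exact mul_nonneg hux (Real.rpow_nonneg hhx.le _)
  have hg0 : 0 ≤ᵐ[μ] fun x => h x ^ s := by
    filter_upwards [hh0] with x hhx
    exact Real.rpow_nonneg hhx.le _
  have hfg : (fun x => u x * h x ^ (-s) * h x ^ s) =ᵐ[μ] u := by
    filter_upwards [hh0] with x hhx
    rw [mul_assoc, ← Real.rpow_add hhx, neg_add_cancel, Real.rpow_zero, mul_one]
  have hf_pow : (fun x => (u x * h x ^ (-s)) ^ (r + 1)) =ᵐ[μ]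
      fun x => u x ^ (r + 1) * h x ^ (-r) := by
    filter_upwards [hu0, hh0] with x hux hhx
    rw [Real.mul_rpow hux (Real.rpow_nonneg hhx.le _), ← Real.rpow_mul hhx.le, neg_mul, hs]
  have hg_pow : (fun x => (h x ^ s) ^ ((r + 1) / r)) =ᵐ[μ] h := by
    filter_upwards [hh0] with x hhx
    rw [← Real.rpow_mul hhx.le, mul_div_assoc', hs, div_self hr.ne', Real.rpow_one]
  have hf : MemLp (fun x => u x * h x ^ (-s)) (ENNReal.ofReal (r + 1)) μ :=
    memLp_ofReal_of_integrable_rpow hr1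
      (hu.mul (hh.aemeasurable.pow_const _).aestronglyMeasurable) hf0 (huh.congr hf_pow.symm)
  have hg : MemLp (fun x => h x ^ s) (ENNReal.ofReal ((r + 1) / r)) μ :=
    memLp_ofReal_of_integrable_rpow (by positivity)
      (hh.aemeasurable.pow_const _).aestronglyMeasurable hg0 (hh.congr hg_pow.symm)
  have holder := integral_mul_le_Lp_mul_Lq_of_nonneg hconj hf0 hg0 hf hg
  rwa [integral_congr_ae hfg, integral_congr_ae hf_pow, integral_congr_ae hg_pow,
    one_div_div] at holder

end

theorem Real.rpow_add_one_mul_div_rpow_neg {u I : ℝ} (r : ℝ) (hu : 0 < u) (hI : 0 ≤ I) :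
    u ^ (r + 1) * (u / I) ^ (-r) = u * I ^ r := by
  rw [Real.rpow_neg (div_nonneg hu.le hI), ← Real.inv_rpow (div_nonneg hu.le hI), inv_div,
    Real.div_rpow hI hu.le, Real.rpow_add_one hu.ne']
  field_simp

section
variable {a b r : ℝ} {u h : ℝ → ℝ}

theorem intervalIntegral_le_rpow_integral_rpow_mul_rpow_neg (hab : a ≤ b) (hr : 0 < r)
    (hu : ContinuousOn u (Set.Icc a b)) (hu0 : ∀ t ∈ Set.Icc a b, 0 ≤ u t)
    (hh : ContinuousOn h (Set.Icc a b)) (hh0 : ∀ t ∈ Set.Icc a b, 0 < h t) :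
    ∫ t in a..b, u t ≤
      (∫ t in a..b, u t ^ (r + 1) * h t ^ (-r)) ^ (1 / (r + 1)) *
        (∫ t in a..b, h t) ^ (r / (r + 1)) := by
  have onIoc {f : ℝ → ℝ} (hf : ContinuousOn f (Set.Icc a b)) :
      Integrable f (volume.restrict (Set.Ioc a b)) :=
    hf.integrableOn_Icc.mono_set Set.Ioc_subset_Icc_self
  have aeOnIoc {P : ℝ → Prop} (hP : ∀ t ∈ Set.Icc a b, P t) :
      ∀ᵐ t ∂volume.restrict (Set.Ioc a b), P t :=
    ae_restrict_of_forall_mem measurableSet_Ioc fun t ht => hP t (Set.Ioc_subset_Icc_self ht)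
  have huh : ContinuousOn (fun t => u t ^ (r + 1) * h t ^ (-r)) (Set.Icc a b) :=
    (hu.rpow_const fun _ _ => Or.inr (by linarith)).mul
      (hh.rpow_const fun t ht => Or.inl (hh0 t ht).ne')
  simp only [intervalIntegral.integral_of_le hab]
  exact integral_le_rpow_integral_rpow_mul_rpow_neg hr (onIoc hu).aestronglyMeasurable
    (aeOnIoc hu0) (onIoc hh) (aeOnIoc hh0) (onIoc huh)

theorem intervalIntegral_rpow_add_one_mul_div_integral_rpow_neg (hab : a ≤ b) (hr : r + 1 ≠ 0)
    (hu0 : ∀ t ∈ Set.Icc a b, 0 < u t) :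
    ∫ t in a..b, u t ^ (r + 1) * (u t / ∫ s in a..b, u s) ^ (-r) =
      (∫ t in a..b, u t) ^ (r + 1) := by
  have hI : 0 ≤ ∫ t in a..b, u t :=
    intervalIntegral.integral_nonneg hab fun t ht => (hu0 t ht).le
  have hpt : Set.EqOn (fun t => u t ^ (r + 1) * (u t / ∫ s in a..b, u s) ^ (-r))
      (fun t => u t * (∫ s in a..b, u s) ^ r) (Set.uIcc a b) := fun t ht => by
    rw [Set.uIcc_of_le hab] at ht
    exact Real.rpow_add_one_mul_div_rpow_neg r (hu0 t ht) hI
  rw [intervalIntegral.integral_congr hpt, intervalIntegral.integral_mul_const,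
    Real.rpow_add_one' hI hr, mul_comm]

end

/-- The density `h*(t) = c(t)^(γ/2) / ∫₀¹ c^(γ/2)` with `γ = 1/(κ + 1/p)` minimizes
`h ↦ (∫₀¹ c^(p/2) h^(−κp))^(1/p)` over positive continuous densities on `[0,1]`,
with minimal value `(∫₀¹ c^(γ/2))^(1/γ)`. -/
theorem optimal_density_Lp (c : ℝ → ℝ) (hc : ContinuousOn c (Set.Icc 0 1))
    (hcpos : ∀ t ∈ Set.Icc (0 : ℝ) 1, 0 < c t) (κ p γ : ℝ) (hκ : 0 < κ)
    (hp : 1 ≤ p) (hγ : γ = 1 / (κ + 1 / p)) :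
    (∀ h : ℝ → ℝ, ContinuousOn h (Set.Icc 0 1) →
      (∀ t ∈ Set.Icc (0 : ℝ) 1, 0 < h t) → (∫ t in (0 : ℝ)..1, h t) = 1 →
      ((∫ t in (0 : ℝ)..1, c t ^ (γ / 2)) ^ (1 / γ)
        ≤ (∫ t in (0 : ℝ)..1, c t ^ (p / 2) * h t ^ (-(κ * p))) ^ (1 / p)))
    ∧ (∫ t in (0 : ℝ)..1, c t ^ (p / 2) *
          (c t ^ (γ / 2) / ∫ s in (0 : ℝ)..1, c s ^ (γ / 2)) ^ (-(κ * p))) ^ (1 / p)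
        = (∫ t in (0 : ℝ)..1, c t ^ (γ / 2)) ^ (1 / γ) := by
  have hκp : 0 < κ * p := by positivity
  have hγinv : 1 / γ = (κ * p + 1) / p := by rw [hγ]; field_simp
  set u : ℝ → ℝ := fun t => c t ^ (γ / 2)
  have hu : ContinuousOn u (Set.Icc 0 1) := hc.rpow_const fun t ht => Or.inl (hcpos t ht).ne'
  have hu0 : ∀ t ∈ Set.Icc (0 : ℝ) 1, 0 < u t := fun t ht => Real.rpow_pos_of_pos (hcpos t ht) _
  have hcu (g : ℝ → ℝ) : ∫ t in (0 : ℝ)..1, c t ^ (p / 2) * g t =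
      ∫ t in (0 : ℝ)..1, u t ^ (κ * p + 1) * g t := by
    refine intervalIntegral.integral_congr fun t ht => ?_
    rw [Set.uIcc_of_le zero_le_one] at ht
    simp only [u, ← Real.rpow_mul (hcpos t ht).le]
    congr 2
    rw [hγ]
    field_simp
  have hI : 0 ≤ ∫ t in (0 : ℝ)..1, u t :=
    intervalIntegral.integral_nonneg zero_le_one fun t ht => (hu0 t ht).le
  refine ⟨fun h hh hhpos hh1 => ?_, ?_⟩
  · have holder := intervalIntegral_le_rpow_integral_rpow_mul_rpow_neg zero_le_one hκp hu
      (fun t ht => (hu0 t ht).le) hh hhpos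
    rw [hh1, Real.one_rpow, mul_one, ← hcu] at holder
    have hA : 0 ≤ ∫ t in (0 : ℝ)..1, c t ^ (p / 2) * h t ^ (-(κ * p)) :=
      intervalIntegral.integral_nonneg zero_le_one fun t ht =>
        mul_nonneg (Real.rpow_nonneg (hcpos t ht).le _) (Real.rpow_nonneg (hhpos t ht).le _)
    calc (∫ t in (0 : ℝ)..1, u t) ^ (1 / γ)
        ≤ ((∫ t in (0 : ℝ)..1, c t ^ (p / 2) * h t ^ (-(κ * p))) ^ (1 / (κ * p + 1))) ^ (1 / γ) :=
          Real.rpow_le_rpow hI holder (by rw [hγinv]; positivity)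
      _ = (∫ t in (0 : ℝ)..1, c t ^ (p / 2) * h t ^ (-(κ * p))) ^ (1 / p) := by
          rw [← Real.rpow_mul hA, hγinv]
          field_simp
  · rw [hcu, intervalIntegral_rpow_add_one_mul_div_integral_rpow_neg zero_le_one
      (by positivity) hu0, ← Real.rpow_mul hI, hγinv]
    ring_nf
end

section
/- Let c : [0,1] → ℝ be positive and continuous and κ > 0. Among all positive continuous densities h on [0,1] with ∫₀¹ h = 1, the functional h ↦ max_{t∈[0,1]} c(t)^{1/2} h(t)^{−κ} is minimized by h*(t) = c(t)^{1/(2κ)} / ∫₀¹ c(s)^{1/(2κ)} ds, and the minimal value equals ( ∫₀¹ c(t)^{1/(2κ)} dt )^{κ}. -/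
/-!
With `g = c ^ (1/(2κ))` and `I = ∫₀¹ g`, one has `√c · h^(-κ) = (g / h)^κ`.
Since `I·h` and `g` have the same integral, `I·h ≤ g` somewhere, so the supremum is at least
`I^κ`; for `h = g / I` the function `(g / h)^κ` is identically `I^κ`.
-/

open Set intervalIntegral

theorem exists_le_of_intervalIntegral_le {f g : ℝ → ℝ} {a b : ℝ} (hab : a < b)
    (hf : ContinuousOn f (Icc a b)) (hg : ContinuousOn g (Icc a b))
    (hfg : ∫ x in a..b, f x ≤ ∫ x in a..b, g x) : ∃ x ∈ Icc a b, f x ≤ g x := by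
  by_contra! hlt
  exact (integral_lt_integral_of_continuousOn_of_le_of_exists_lt hab hg hf
    (fun x hx ↦ (hlt x (Ioc_subset_Icc_self hx)).le)
    ⟨a, left_mem_Icc.2 hab.le, hlt a (left_mem_Icc.2 hab.le)⟩).not_ge hfg

theorem Real.sqrt_mul_rpow_neg {c x : ℝ} (hc : 0 ≤ c) (hx : 0 ≤ x) {κ : ℝ}
    (hκ : κ ≠ 0) :
    √c * x ^ (-κ) = (c ^ (1 / (2 * κ)) / x) ^ κ := by
  have hsqrt : √c = (c ^ (1 / (2 * κ))) ^ κ := by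
    rw [Real.sqrt_eq_rpow, ← Real.rpow_mul hc]
    field_simp
  rw [hsqrt, Real.div_rpow (by positivity) hx, Real.rpow_neg hx, ← div_eq_mul_inv]

/-- The density `h*(t) = c(t)^(1/(2κ)) / ∫₀¹ c^(1/(2κ))` minimizes
`h ↦ max_{[0,1]} c^(1/2) h^(−κ)` over positive continuous densities on `[0,1]`,
with minimal value `(∫₀¹ c^(1/(2κ)))^κ`. -/
theorem optimal_density_sup (c : ℝ → ℝ) (hc : ContinuousOn c (Set.Icc 0 1))
    (hcpos : ∀ t ∈ Set.Icc (0 : ℝ) 1, 0 < c t) (κ : ℝ) (hκ : 0 < κ) :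
    (∀ h : ℝ → ℝ, ContinuousOn h (Set.Icc 0 1) →
      (∀ t ∈ Set.Icc (0 : ℝ) 1, 0 < h t) → (∫ t in (0 : ℝ)..1, h t) = 1 →
      ((∫ t in (0 : ℝ)..1, c t ^ (1 / (2 * κ))) ^ κ
        ≤ sSup ((fun t => Real.sqrt (c t) * h t ^ (-κ)) '' Set.Icc 0 1)))
    ∧ sSup ((fun t => Real.sqrt (c t) *
          (c t ^ (1 / (2 * κ)) / ∫ s in (0 : ℝ)..1, c s ^ (1 / (2 * κ))) ^ (-κ)) ''
            Set.Icc 0 1)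
        = (∫ t in (0 : ℝ)..1, c t ^ (1 / (2 * κ))) ^ κ := by
  set g : ℝ → ℝ := fun t ↦ c t ^ (1 / (2 * κ))
  set I := ∫ t in (0 : ℝ)..1, g t
  have hgpos : ∀ t ∈ Icc (0 : ℝ) 1, 0 < g t :=
    fun t ht ↦ Real.rpow_pos_of_pos (hcpos t ht) _
  have hg : ContinuousOn g (Icc 0 1) := hc.rpow_const fun _ _ ↦ Or.inr (by positivity)
  have hI : 0 < I := integral_pos zero_lt_one hg
    (fun t ht ↦ (hgpos t (Ioc_subset_Icc_self ht)).le)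
    ⟨0, left_mem_Icc.2 zero_le_one, hgpos 0 (left_mem_Icc.2 zero_le_one)⟩
  have hratio : ∀ h : ℝ → ℝ, (∀ t ∈ Icc (0 : ℝ) 1, 0 < h t) →
      (fun t ↦ √(c t) * h t ^ (-κ)) '' Icc 0 1 = (fun t ↦ (g t / h t) ^ κ) '' Icc 0 1 :=
    fun h hh ↦ EqOn.image_eq fun t ht ↦
      Real.sqrt_mul_rpow_neg (hcpos t ht).le (hh t ht).le hκ.ne'
  refine ⟨fun h hh hhpos hhint ↦ ?_, ?_⟩
  · obtain ⟨t, ht, hle⟩ := exists_le_of_intervalIntegral_le zero_lt_one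
      (f := fun t ↦ I * h t) (continuousOn_const.mul hh) hg
      (by rw [integral_const_mul, hhint, mul_one])
    have hbdd : BddAbove ((fun t ↦ (g t / h t) ^ κ) '' Icc 0 1) :=
      (isCompact_Icc.image_of_continuousOn ((hg.div hh fun t ht ↦ (hhpos t ht).ne').rpow_const
        fun _ _ ↦ Or.inr hκ.le)).bddAbove
    rw [hratio h hhpos]
    exact (Real.rpow_le_rpow hI.le ((le_div_iff₀ (hhpos t ht)).2 hle) hκ.le).trans
      (le_csSup hbdd ⟨t, ht, rfl⟩)
  · have hconst : EqOn (fun t ↦ (g t / (g t / I)) ^ κ) (fun _ ↦ I ^ κ) (Icc 0 1) :=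
      fun t ht ↦ by simp only [div_div_cancel₀ (hgpos t ht).ne']
    rw [hratio _ fun t ht ↦ div_pos (hgpos t ht) hI, hconst.image_eq,
      (nonempty_Icc.2 zero_le_one).image_const, csSup_singleton]
end
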